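/- Let R = ℂ[x,y,z]/(x² + y² + z² − 1), and define C = [[y(x+iy)/2 + iz²/4, iz, x], [−x(x+iy)/2 − z²/4, z, y], [z(y−ix)/4, −(y+ix), z]] and C̄ = [[y(x−iy)/2 − iz²/4, −iz, x], [−x(x−iy)/2 − z²/4, z, y], [z(y+ix)/4, −(y−ix), z]] in M₃(R). Let Â₂ = [[(x − iy)², −4z, 0], [z(z² − 2)/4, −(x + iy)², 0], [0, 0, 1]]. Then C · Â₂ = C̄. -/
import Mathlib


open MvPolynomial Matrix

noncomputable section

def Isph : Ideal (MvPolynomial (Fin 3) ℂ) :=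
  Ideal.span {X 0 ^ 2 + X 1 ^ 2 + X 2 ^ 2 - 1}

/-- `R = ℂ[x,y,z]/(x² + y² + z² − 1)`. -/
abbrev Rc : Type := MvPolynomial (Fin 3) ℂ ⧸ Isph

def xR : Rc := Ideal.Quotient.mk Isph (X 0)
def yR : Rc := Ideal.Quotient.mk Isph (X 1)
def zR : Rc := Ideal.Quotient.mk Isph (X 2)
def iR : Rc := Ideal.Quotient.mk Isph (C Complex.I)

/-- `C = [[y(x+iy)/2 + iz²/4, iz, x], [−x(x+iy)/2 − z²/4, z, y], [z(y−ix)/4, −(y+ix), z]]`. -/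
def Cm : Matrix (Fin 3) (Fin 3) Rc :=
  !![((2:ℂ)⁻¹ : ℂ) • (yR * (xR + iR * yR)) + ((4:ℂ)⁻¹ : ℂ) • (iR * zR ^ 2), iR * zR, xR;
     -(((2:ℂ)⁻¹ : ℂ) • (xR * (xR + iR * yR))) - ((4:ℂ)⁻¹ : ℂ) • zR ^ 2, zR, yR;
     ((4:ℂ)⁻¹ : ℂ) • (zR * (yR - iR * xR)), -(yR + iR * xR), zR]

/-- `C̄`, the coefficientwise conjugate (`i ↦ −i`) of `C`. -/
def Cmbar : Matrix (Fin 3) (Fin 3) Rc :=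
  !![((2:ℂ)⁻¹ : ℂ) • (yR * (xR - iR * yR)) - ((4:ℂ)⁻¹ : ℂ) • (iR * zR ^ 2), -(iR * zR), xR;
     -(((2:ℂ)⁻¹ : ℂ) • (xR * (xR - iR * yR))) - ((4:ℂ)⁻¹ : ℂ) • zR ^ 2, zR, yR;
     ((4:ℂ)⁻¹ : ℂ) • (zR * (yR + iR * xR)), -(yR - iR * xR), zR]

/-- `Â₂ = [[(x − iy)², −4z, 0], [z(z² − 2)/4, −(x + iy)², 0], [0, 0, 1]]`. -/
def A2hat : Matrix (Fin 3) (Fin 3) Rc :=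
  !![(xR - iR * yR) ^ 2, -(4 * zR), 0;
     ((4:ℂ)⁻¹ : ℂ) • (zR * (zR ^ 2 - 2)), -(xR + iR * yR) ^ 2, 0;
     0, 0, 1]

set_option maxHeartbeats 1600000 in
/-- `C · Â₂ = C̄`, witnessing that the real structure `Σ₂ × σ` on
`𝕊²_ℂ × 𝔸³_ℂ` is equivalent to the standard one. -/
theorem C_mul_A2hat_eq_Cbar : Cm * A2hat = Cmbar := by
  have hS : xR ^ 2 + yR ^ 2 + zR ^ 2 = 1 := by
    have h : Ideal.Quotient.mk Isph (X 0 ^ 2 + X 1 ^ 2 + X 2 ^ 2 - 1) = 0 :=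
      Ideal.Quotient.eq_zero_iff_mem.2 (Ideal.subset_span rfl)
    rw [map_sub, sub_eq_zero] at h
    simpa [xR, yR, zR, map_add, map_pow] using h
  have hJ : iR ^ 2 = -1 := by
    rw [iR, ← map_pow, ← map_pow, Complex.I_sq]
    simp
  have hH : (2 : Rc) * algebraMap ℂ Rc 2⁻¹ = 1 := by
    rw [show ((2 : Rc)) = algebraMap ℂ Rc 2 from (map_ofNat _ 2).symm, ← _root_.map_mul]
    norm_num
  have hQ : (4 : Rc) * algebraMap ℂ Rc 4⁻¹ = 1 := by
    rw [show ((4 : Rc)) = algebraMap ℂ Rc 4 from (map_ofNat _ 4).symm, ← _root_.map_mul]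
    norm_num
  have cancel : ∀ u v : Rc, (16 : Rc) * u = 16 * v → u = v := by
    intro u v h
    linear_combination (algebraMap ℂ Rc 2⁻¹) ^ 4 * h -
      (u - v) * (1 + 2 * (algebraMap ℂ Rc 2⁻¹) + 4 * (algebraMap ℂ Rc 2⁻¹) ^ 2 +
        8 * (algebraMap ℂ Rc 2⁻¹) ^ 3) * hH
  have hsm : ∀ (c : ℂ) (a : Rc), c • a = algebraMap ℂ Rc c * a := fun c a =>
    Algebra.smul_def (A := Rc) c a
  rw [Cm, A2hat, Cmbar, Matrix.mul_fin_three]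
  simp only [hsm]
  ext i j
  fin_cases i <;> fin_cases j <;>
    simp only [Fin.isValue, Fin.zero_eta, Fin.mk_one, Fin.reduceFinMk, Matrix.cons_val',
      Matrix.cons_val_zero, Matrix.cons_val_one, Matrix.cons_val_two, Matrix.tail_cons,
      Matrix.head_cons, Matrix.empty_val', Matrix.cons_val_fin_one, Matrix.head_fin_const,
      Matrix.of_apply] <;>
    refine cancel _ _ ?_
  · linear_combination ((4:Rc)*zR^2*iR + (-8:Rc)*yR^2*iR + (8:Rc)*xR*yR)*hS + ((4:Rc)*yR^2*zR^2*iR + (8:Rc)*yR^4*iR + (-8:Rc)*xR*yR*zR^2 + (-8:Rc)*xR*yR^3)*hJ + ((8:Rc)*yR^2*iR + (8:Rc)*yR^4*iR^3 + (-8:Rc)*xR*yR + (-8:Rc)*xR*yR^3*iR^2 + (-8:Rc)*xR^2*yR^2*iR + (8:Rc)*xR^3*yR)*hH + ((-4:Rc)*zR^2*iR + (4:Rc)*zR^4*iR + (4:Rc)*yR^2*zR^2*iR^3 + (-8:Rc)*xR*yR*zR^2*iR^2 + (4:Rc)*xR^2*zR^2*iR)*hQ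
  · linear_combination ((-16:Rc)*zR*iR)*hS + ((-16:Rc)*yR^2*zR*iR + (-32:Rc)*xR*yR*zR)*hJ + ((-32:Rc)*yR^2*zR*iR + (-32:Rc)*xR*yR*zR)*hH + ((-16:Rc)*zR^3*iR)*hQ
  · ring
  · linear_combination ((4:Rc)*zR^2 + (8:Rc)*xR*yR*iR + (-8:Rc)*xR^2)*hS + ((-4:Rc)*yR^2*zR^2 + (-8:Rc)*xR*yR^3*iR + (8:Rc)*xR^2*yR^2)*hJ + ((-8:Rc)*xR*yR*iR + (-8:Rc)*xR*yR^3*iR^3 + (8:Rc)*xR^2 + (8:Rc)*xR^2*yR^2*iR^2 + (8:Rc)*xR^3*yR*iR + (-8:Rc)*xR^4)*hH + ((-4:Rc)*zR^2 + (4:Rc)*zR^4 + (-4:Rc)*yR^2*zR^2*iR^2 + (8:Rc)*xR*yR*zR^2*iR + (-4:Rc)*xR^2*zR^2)*hQ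
  · linear_combination ((16:Rc)*zR)*hS + ((-16:Rc)*yR^2*zR)*hJ + ((32:Rc)*xR*yR*zR*iR + (32:Rc)*xR^2*zR)*hH + ((16:Rc)*zR^3)*hQ
  · ring
  · linear_combination ((-4:Rc)*yR*zR + (-4:Rc)*xR*zR*iR)*hS + ((4:Rc)*yR^3*zR + (-4:Rc)*xR*yR^2*zR*iR + (8:Rc)*xR^2*yR*zR)*hJ + ((4:Rc)*yR*zR + (-4:Rc)*yR*zR^3 + (4:Rc)*yR^3*zR*iR^2 + (4:Rc)*xR*zR*iR + (-4:Rc)*xR*zR^3*iR + (-8:Rc)*xR*yR^2*zR*iR + (-4:Rc)*xR*yR^2*zR*iR^3 + (4:Rc)*xR^2*yR*zR + (8:Rc)*xR^2*yR*zR*iR^2 + (-4:Rc)*xR^3*zR*iR)*hQ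
  · linear_combination ((-16:Rc)*yR + (16:Rc)*xR*iR)*hS + ((16:Rc)*yR^3 + (16:Rc)*xR*yR^2*iR + (32:Rc)*xR^2*yR)*hJ + ((-16:Rc)*yR*zR^2 + (16:Rc)*xR*zR^2*iR)*hQ
  · ring
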